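/- arXiv:1810.02573 — 3 statements merged into one kernel-verified Lean document; each statement's English description precedes it below -/
import Mathlib

section
/- Let p be an odd prime and n_p the least positive quadratic non-residue modulo p. If a is a quadratic non-residue modulo p and n is squarefull with n ≡ a (mod p) and p ∤ n, then writing n = r^2 * s with s | r, we have s ≥ n_p; consequently n ≥ n_p^3. -/
/-! Since `n = r ^ 2 * s` differs from `s` by a square factor, `s` is a non-residue along with
`n ≡ a`, so `s ≥ n_p` by minimality of `n_p`; and `s ∣ r` gives `n = r ^ 2 * s ≥ s ^ 3`. -/

def Squarefull (n : ℕ) : Prop := ∀ p : ℕ, p.Prime → p ∣ n → p ^ 2 ∣ n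

lemma not_isSquare_of_not_isSquare_sq_mul {M : Type*} [CommMonoid M] {r s : M}
    (h : ¬ IsSquare (r ^ 2 * s)) : ¬ IsSquare s :=
  fun hs => h ((IsSquare.sq r).mul hs)

lemma pow_three_le_sq_mul_of_le {R : Type*} [Semiring R] [PartialOrder R]
    [IsOrderedRing R] {r s : R} (hs : 0 ≤ s) (hsr : s ≤ r) : s ^ 3 ≤ r ^ 2 * s := by
  rw [pow_succ]
  gcongr

theorem squarefull_nonresidue_lower_bound_general (p : ℕ)
    (np : ℕ)
    (hnpmin : ∀ m : ℕ, 0 < m → ¬ IsSquare (m : ZMod p) → np ≤ m)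
    (a : ZMod p) (ha : ¬ IsSquare a)
    (n : ℕ) (hcong : (n : ZMod p) = a)
    (r s : ℕ) (hr : 0 < r) (hs : 0 < s) (hsr : s ∣ r) (hrs : n = r ^ 2 * s) :
    np ≤ s ∧ np ^ 3 ≤ n := by
  have hs_nonsq : ¬ IsSquare (s : ZMod p) := by
    apply not_isSquare_of_not_isSquare_sq_mul (r := (r : ZMod p))
    rwa [← Nat.cast_pow, ← Nat.cast_mul, ← hrs, hcong]
  have hnp_le : np ≤ s := hnpmin s hs hs_nonsq
  refine ⟨hnp_le, ?_⟩
  calc np ^ 3 ≤ s ^ 3 := by gcongr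
    _ ≤ r ^ 2 * s := pow_three_le_sq_mul_of_le s.zero_le (Nat.le_of_dvd hr hsr)
    _ = n := hrs.symm

theorem squarefull_nonresidue_lower_bound (p : ℕ) [Fact p.Prime] (hp : Odd p)
    (np : ℕ) (hnp0 : 0 < np) (hnpns : ¬ IsSquare (np : ZMod p))
    (hnpmin : ∀ m : ℕ, 0 < m → ¬ IsSquare (m : ZMod p) → np ≤ m)
    (a : ZMod p) (ha : ¬ IsSquare a)
    (n : ℕ) (hn : 0 < n) (hsf : Squarefull n) (hcong : (n : ZMod p) = a)
    (hpn : ¬ (p ∣ n))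
    (r s : ℕ) (hr : 0 < r) (hs : 0 < s) (hsr : s ∣ r) (hrs : n = r ^ 2 * s) :
    np ≤ s ∧ np ^ 3 ≤ n :=
  squarefull_nonresidue_lower_bound_general p np hnpmin a ha n hcong r s hr hs hsr hrs
end

section
/- Let p be an odd prime and n_p the least quadratic non-residue modulo p. Then the maximum over all residues a mod p of F(a,p), the least positive squarefull integer congruent to a mod p, satisfies max_a F(a,p) ≥ c * p^2 * n_p for some absolute constant c > 0. -/
open Finset

theorem Squarefull.exists_eq_cube_mul_sq {n : ℕ} (hn : Squarefull n) (h0 : 0 < n) :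
    ∃ a t : ℕ, 0 < a ∧ 0 < t ∧ n = a ^ 3 * t ^ 2 := by
  obtain ⟨a, b, ha, hb, rfl, hsq⟩ := Nat.sq_mul_squarefree_of_pos h0
  have hab : a ∣ b := by
    rw [← Nat.prod_primeFactors_of_squarefree hsq, Nat.prod_primeFactors_dvd_iff hb.ne']
    intro q hq
    have hq' := Nat.prime_of_mem_primeFactors hq
    have hq2 : q ^ (1 + 1) ∣ a * b ^ 2 :=
      mul_comm a _ ▸ hn q hq' (dvd_mul_of_dvd_right (Nat.dvd_of_mem_primeFactors hq) _)
    have hqb : q ∣ b ^ 2 := by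
      simpa using hsq.pow_dvd_of_squarefree_of_pow_succ_dvd_mul_right hq'.prime hq2
    exact Nat.mem_primeFactors.2 ⟨hq', hq'.dvd_of_dvd_pow hqb, hb.ne'⟩
  obtain ⟨t, rfl⟩ := hab
  exact ⟨a, t, ha, Nat.pos_of_mul_pos_left hb, by ring⟩

theorem ZMod.sub_one_div_two_le_card_nonsquares (n : ℕ) [NeZero n] :
    (n - 1) / 2 ≤ #{x : ZMod n | ¬IsSquare x} := by
  have hsq : ({x : ZMod n | IsSquare x} : Finset _) ⊆
      (range (n / 2 + 1)).image fun k : ℕ => (k : ZMod n) ^ 2 := by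
    intro x hx
    obtain ⟨r, rfl⟩ := (mem_filter.1 hx).2
    refine mem_image.2
      ⟨r.valMinAbs.natAbs, mem_range.2 (Nat.lt_succ_of_le r.natAbs_valMinAbs_le), ?_⟩
    rw [ZMod.natCast_natAbs_valMinAbs]
    split_ifs <;> ring
  have hcard := (card_le_card hsq).trans card_image_le
  have hsplit := (univ : Finset (ZMod n)).card_filter_add_card_filter_not fun x => IsSquare x
  rw [card_univ, ZMod.card] at hsplit
  rw [card_range] at hcard
  omega

theorem one_div_mul_sqrt_le_sub {x : ℝ} (hx : 1 < x) :
    1 / (x * √x) ≤ 2 / √(x - 1) - 2 / √x := by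
  set u := √(x - 1)
  set v := √x
  have hu : 0 < u := Real.sqrt_pos.2 (by linarith)
  have hv : 0 < v := Real.sqrt_pos.2 (by linarith)
  have huv : u ≤ v := Real.sqrt_le_sqrt (by linarith)
  have hvu : v ^ 2 - u ^ 2 = 1 := by
    rw [Real.sq_sqrt (by linarith), Real.sq_sqrt (by linarith)]; ring
  have hx' : x = v ^ 2 := (Real.sq_sqrt (by linarith)).symm
  rw [hx', div_sub_div _ _ hu.ne' hv.ne', div_le_div_iff₀ (by positivity) (by positivity)]
  -- `v - u = 1 / (v + u) ≥ 1 / (2 v)`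
  nlinarith [mul_pos hu hv, mul_nonneg (mul_nonneg hv.le (sub_nonneg.2 huv)) (sub_nonneg.2 huv)]

theorem sum_Icc_one_div_mul_sqrt_le {N : ℕ} (hN : 2 ≤ N) (B : ℕ) :
    ∑ s ∈ Icc N B, 1 / ((s : ℝ) * √s) ≤ 2 / √(N - 1) := by
  have telescope : ∀ B, N - 1 ≤ B →
      ∑ s ∈ Icc N B, 1 / ((s : ℝ) * √s) ≤ 2 / √(N - 1) - 2 / √B := by
    intro B hB
    induction B, hB using Nat.le_induction with
    | base => simp [Icc_eq_empty (by omega : ¬N ≤ N - 1), Nat.cast_sub (by omega : 1 ≤ N)]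
    | succ B hB ih =>
      have hstep := one_div_mul_sqrt_le_sub (x := (B : ℝ) + 1) (by norm_cast; omega)
      rw [add_sub_cancel_right] at hstep
      rw [sum_Icc_succ_top (by omega)]
      push_cast
      linarith
  rcases le_or_gt (N - 1) B with hB | hB
  · exact (telescope B hB).trans (sub_le_self _ (by positivity))
  · rw [Icc_eq_empty (by omega), sum_empty]; positivity

def cubeMulSqPairs (N M : ℕ) : Finset (ℕ × ℕ) :=
  {q ∈ Icc N M ×ˢ Icc 1 M | q.1 ^ 3 * q.2 ^ 2 ≤ M}

theorem card_filter_cube_mul_sq_le {a : ℕ} (ha : 0 < a) (M : ℕ) :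
    (#{t ∈ Icc 1 M | a ^ 3 * t ^ 2 ≤ M} : ℝ) ≤ √M / (a * √a) := by
  have ha' : (0 : ℝ) < a * √a := by positivity
  have hsub : {t ∈ Icc 1 M | a ^ 3 * t ^ 2 ≤ M} ⊆ Icc 1 ⌊√M / (a * √a)⌋₊ := by
    intro t ht
    obtain ⟨ht, hle⟩ := mem_filter.1 ht
    refine mem_Icc.2 ⟨(mem_Icc.1 ht).1, Nat.le_floor ?_⟩
    rw [le_div_iff₀ ha', Real.le_sqrt (by positivity) (by positivity)]
    calc ((t : ℝ) * (a * √a)) ^ 2 = ((a ^ 3 * t ^ 2 : ℕ) : ℝ) := by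
          push_cast; rw [mul_pow, mul_pow, Real.sq_sqrt (by positivity)]; ring
      _ ≤ M := by exact_mod_cast hle
  calc (#{t ∈ Icc 1 M | a ^ 3 * t ^ 2 ≤ M} : ℝ) ≤ ⌊√M / (a * √a)⌋₊ := by
        exact_mod_cast (card_le_card hsub).trans (by simp)
    _ ≤ √M / (a * √a) := Nat.floor_le (by positivity)

theorem sq_card_cubeMulSqPairs_mul_le {N : ℕ} (hN : 2 ≤ N) (M : ℕ) :
    (#(cubeMulSqPairs N M) : ℝ) ^ 2 * (N - 1) ≤ 4 * M := by
  have hcard : (#(cubeMulSqPairs N M) : ℝ) ≤ √M * (2 / √(N - 1)) := by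
    calc (#(cubeMulSqPairs N M) : ℝ)
        = ∑ a ∈ Icc N M, (#{t ∈ Icc 1 M | a ^ 3 * t ^ 2 ≤ M} : ℝ) := by
          rw [cubeMulSqPairs, card_filter, sum_product]; simp only [card_filter]; push_cast; rfl
      _ ≤ ∑ a ∈ Icc N M, √M * (1 / ((a : ℝ) * √a)) := by
          refine sum_le_sum fun a ha => ?_
          rw [mul_one_div]
          exact card_filter_cube_mul_sq_le (by have := (mem_Icc.1 ha).1; omega) M
      _ ≤ √M * (2 / √(N - 1)) := by
          rw [← mul_sum]
          exact mul_le_mul_of_nonneg_left (sum_Icc_one_div_mul_sqrt_le hN M) (by positivity)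
  have hN1 : (0 : ℝ) < N - 1 := by
    have : (2 : ℝ) ≤ N := by exact_mod_cast hN
    linarith
  calc (#(cubeMulSqPairs N M) : ℝ) ^ 2 * ((N : ℝ) - 1)
      ≤ (√M * (2 / √(N - 1))) ^ 2 * (N - 1) := by gcongr
    _ = 4 * (M : ℝ) := by
        rw [mul_pow, div_pow, Real.sq_sqrt (by positivity), Real.sq_sqrt hN1.le]
        field_simp; ring

theorem Squarefull.exists_mem_cubeMulSqPairs {R : Type*} [CommSemiring R] {N M n : ℕ}
    (hN : ∀ m : ℕ, 0 < m → ¬IsSquare (m : R) → N ≤ m) (hn : Squarefull n) (hn0 : 0 < n)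
    (hnM : n ≤ M) (hsq : ¬IsSquare (n : R)) :
    ∃ q ∈ cubeMulSqPairs N M, q.1 ^ 3 * q.2 ^ 2 = n := by
  obtain ⟨a, t, ha, ht, rfl⟩ := hn.exists_eq_cube_mul_sq hn0
  have haN : N ≤ a := hN a ha fun ⟨r, hr⟩ =>
    hsq ⟨r ^ 3 * t, by push_cast; rw [hr]; ring⟩
  have haM : a ≤ M := (Nat.le_self_pow three_ne_zero a).trans
    ((Nat.le_mul_of_pos_right _ (by positivity)).trans hnM)
  have htM : t ≤ M := (Nat.le_self_pow two_ne_zero t).trans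
    ((Nat.le_mul_of_pos_left _ (by positivity)).trans hnM)
  exact ⟨(a, t),
    mem_filter.2 ⟨mem_product.2 ⟨mem_Icc.2 ⟨haN, haM⟩, mem_Icc.2 ⟨ht, htM⟩⟩, hnM⟩, rfl⟩

theorem max_F_lower_bound :
    ∃ c : ℝ, 0 < c ∧ ∀ (p : ℕ), p.Prime → Odd p →
      ∀ np : ℕ, 0 < np → ¬ IsSquare (np : ZMod p) →
      (∀ m : ℕ, 0 < m → ¬ IsSquare (m : ZMod p) → np ≤ m) →
      ∀ M : ℕ,
      (∀ a : ZMod p, ∃ n : ℕ, 0 < n ∧ n ≤ M ∧ Squarefull n ∧ (n : ZMod p) = a) →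
      c * p ^ 2 * np ≤ M := by
  refine ⟨1 / 72, by norm_num, fun p hp hodd np hnp0 hnp hmin M H => ?_⟩
  have := Fact.mk hp
  have hnp2 : 2 ≤ np := by
    rcases (by omega : np = 1 ∨ 2 ≤ np) with rfl | h
    · exact absurd (by simp) hnp
    · exact h
  have hsub : ({x : ZMod p | ¬IsSquare x} : Finset _) ⊆
      (cubeMulSqPairs np M).image fun q => ((q.1 ^ 3 * q.2 ^ 2 : ℕ) : ZMod p) := by
    intro x hx
    obtain ⟨n, hn0, hnM, hn, rfl⟩ := H x
    obtain ⟨q, hq, hqn⟩ := hn.exists_mem_cubeMulSqPairs hmin hn0 hnM (mem_filter.1 hx).2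
    exact mem_image.2 ⟨q, hq, by rw [hqn]⟩
  set K := #(cubeMulSqPairs np M)
  have hpK : (p : ℝ) ≤ 3 * K := by
    have hK := (ZMod.sub_one_div_two_le_card_nonsquares p).trans
      ((card_le_card hsub).trans card_image_le)
    obtain ⟨k, rfl⟩ := hodd
    have hp2 := hp.two_le
    exact_mod_cast (by omega : 2 * k + 1 ≤ 3 * K)
  have hnp_le : (np : ℝ) ≤ 2 * (np - 1) := by
    have : (2 : ℝ) ≤ np := by exact_mod_cast hnp2
    linarith
  calc 1 / 72 * (p : ℝ) ^ 2 * np ≤ 1 / 72 * (3 * K) ^ 2 * (2 * (np - 1)) := by gcongr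
    _ = (K : ℝ) ^ 2 * (np - 1) / 4 := by ring
    _ ≤ M := by linarith [sq_card_cubeMulSqPairs_mul_le hnp2 M]
end

section
/- Let p be an odd prime, a a quadratic non-residue mod p, and n_p the least positive quadratic non-residue mod p. Then F(a,p), the least positive squarefull integer congruent to a mod p, satisfies F(a,p) ≤ n_p^3 * (p-1)^2. -/
theorem Squarefull.mul {m n : ℕ} (hm : Squarefull m) (hn : Squarefull n) :
    Squarefull (m * n) := by
  intro q hq hdvd
  rcases hq.dvd_mul.mp hdvd with hqm | hqn
  · exact (hm q hq hqm).mul_right n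
  · exact (hn q hq hqn).mul_left m

theorem squarefull_pow {e : ℕ} (he : 2 ≤ e) (m : ℕ) : Squarefull (m ^ e) := fun q hq hdvd =>
  (pow_dvd_pow q he).trans (pow_dvd_pow_of_dvd (hq.dvd_of_dvd_pow hdvd) e)

theorem isSquare_mul_of_not_isSquare {F : Type*} [Field F] [Fintype F] {a b : F}
    (ha : ¬IsSquare a) (hb : ¬IsSquare b) : IsSquare (a * b) := by
  have ha0 : a ≠ 0 := fun h => ha (h ▸ IsSquare.zero)
  have hb0 : b ≠ 0 := fun h => hb (h ▸ IsSquare.zero)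
  classical
  refine (quadraticChar_one_iff_isSquare (mul_ne_zero ha0 hb0)).mp ?_
  rw [map_mul, quadraticChar_neg_one_iff_not_isSquare.mpr ha,
    quadraticChar_neg_one_iff_not_isSquare.mpr hb]
  norm_num

theorem exists_eq_pow_three_mul_sq_of_not_isSquare {F : Type*} [Field F] [Fintype F] {a u : F}
    (ha : ¬IsSquare a) (hu : ¬IsSquare u) : ∃ b : F, b ≠ 0 ∧ a = u ^ 3 * b ^ 2 := by
  have hu0 : u ≠ 0 := fun h => hu (h ▸ IsSquare.zero)
  obtain ⟨c, hc⟩ := isSquare_mul_of_not_isSquare ha hu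
  have ha_eq : a = u ^ 3 * (c / u ^ 2) ^ 2 := by
    field_simp
    linear_combination hc
  refine ⟨c / u ^ 2, fun hb => ha ?_, ha_eq⟩
  rw [ha_eq, hb]
  exact ⟨0, by ring⟩

theorem F_upper_bound_nonresidue_general (p : ℕ) [Fact p.Prime]
    (a : ZMod p) (ha : ¬ IsSquare a)
    (np : ℕ) (hnp0 : 0 < np) (hnpns : ¬ IsSquare (np : ZMod p)) :
    ∃ n : ℕ, 0 < n ∧ Squarefull n ∧ (n : ZMod p) = a ∧ n ≤ np ^ 3 * (p - 1) ^ 2 := by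
  obtain ⟨b, hb0, hab⟩ := exists_eq_pow_three_mul_sq_of_not_isSquare ha hnpns
  refine ⟨np ^ 3 * b.val ^ 2, ?_,
    (squarefull_pow (by norm_num) _).mul (squarefull_pow le_rfl _), ?_, ?_⟩
  · have hb_pos : 0 < b.val := ZMod.val_pos.mpr hb0
    positivity
  · push_cast
    rw [ZMod.natCast_zmod_val, hab]
  · gcongr
    exact Nat.le_sub_one_of_lt b.val_lt

theorem F_upper_bound_nonresidue (p : ℕ) [Fact p.Prime] (hp : Odd p)
    (a : ZMod p) (ha : ¬ IsSquare a)
    (np : ℕ) (hnp0 : 0 < np) (hnpns : ¬ IsSquare (np : ZMod p))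
    (hnpmin : ∀ m : ℕ, 0 < m → ¬ IsSquare (m : ZMod p) → np ≤ m) :
    ∃ n : ℕ, 0 < n ∧ Squarefull n ∧ (n : ZMod p) = a ∧ n ≤ np ^ 3 * (p - 1) ^ 2 :=
  F_upper_bound_nonresidue_general p a ha np hnp0 hnpns
end
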